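/- arXiv:2511.06302 — 8 statements merged into one kernel-verified Lean document; each statement's English description precedes it below -/
import Mathlib

section
/- Let n ≥ 1, let A, B be n×n complex matrices, let m : ℂ → ℂ and μ ∈ ℂ with m(p+μ−1) ≠ 0 for every natural number p, and set r(p) := m(p+μ)/m(p+μ−1). Assume B·s₀ = r(0)·s₀, that r(p)·I − B is invertible for each p ≥ 1, and that there exists C > 0 with ‖(r(p)·I − B)⁻¹‖ ≤ C for all p ≥ 1, where ‖·‖ is the operator norm on n×n complex matrices induced by the Euclidean norm on ℂⁿ. Define s_p := (r(p)·I − B)⁻¹·A·s_{p−1} for p ≥ 1. Then ‖s_p‖ ≤ ‖s₀‖·(C·‖A‖)^p for every p ≥ 0, and consequently there exists ρ > 0 such that the series Σ_{p≥0} ‖s_p‖·ρ^p is summable; in particular the power series Σ_{p≥0} s_p z^p has positive radius of convergence, so the Floquet solution Σ_{p≥0} s_p z^{p+μ} of z∂_m y = (zA+B)y is convergent near the origin. -/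
/-- The Euclidean norm of a vector in `ℂⁿ`. -/
noncomputable def vecNorm {n : ℕ} (v : Fin n → ℂ) : ℝ :=
  ‖(WithLp.equiv 2 (Fin n → ℂ)).symm v‖

/-- The operator norm on `n×n` complex matrices induced by the Euclidean norm on `ℂⁿ`. -/
noncomputable def matNorm {n : ℕ} (M : Matrix (Fin n) (Fin n) ℂ) : ℝ :=
  ‖Matrix.toEuclideanCLM (𝕜 := ℂ) (n := Fin n) M‖

/-!
Each step of the recursion multiplies the norm by at most `C‖A‖`, so the coefficients grow at
most geometrically and `Σ ‖s_p‖ ρ^p` is dominated by a convergent geometric series once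
`C‖A‖ρ < 1`.
-/

lemma vecNorm_nonneg {n : ℕ} (v : Fin n → ℂ) : 0 ≤ vecNorm v := norm_nonneg _

lemma matNorm_nonneg {n : ℕ} (M : Matrix (Fin n) (Fin n) ℂ) : 0 ≤ matNorm M := norm_nonneg _

lemma vecNorm_mulVec_le {n : ℕ} (M : Matrix (Fin n) (Fin n) ℂ) (v : Fin n → ℂ) :
    vecNorm (M.mulVec v) ≤ matNorm M * vecNorm v :=
  (Matrix.toEuclideanCLM (𝕜 := ℂ) (n := Fin n) M).le_opNorm _

lemma exists_summable_mul_pow_of_le_geometric {u : ℕ → ℝ} {a K : ℝ} (hu₀ : ∀ p, 0 ≤ u p)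
    (hK : 0 ≤ K) (hu : ∀ p, u p ≤ a * K ^ p) : ∃ ρ > 0, Summable fun p => u p * ρ ^ p := by
  have hρ : 0 < (K + 1)⁻¹ := inv_pos.mpr (by linarith)
  have hKρ : K * (K + 1)⁻¹ < 1 := by
    rw [mul_inv_lt_iff₀ (by linarith), one_mul]
    linarith
  refine ⟨(K + 1)⁻¹, hρ, ?_⟩
  refine ((summable_geometric_of_lt_one (by positivity) hKρ).mul_left a).of_nonneg_of_le
    (fun p => mul_nonneg (hu₀ p) (pow_nonneg hρ.le p)) fun p => ?_
  calc u p * (K + 1)⁻¹ ^ p ≤ a * K ^ p * (K + 1)⁻¹ ^ p := by gcongr; exact hu p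
    _ = a * (K * (K + 1)⁻¹) ^ p := by rw [mul_pow, mul_assoc]

theorem stmt2_general (n : ℕ) (A B : Matrix (Fin n) (Fin n) ℂ)
    (r : ℕ → ℂ)
    (s : ℕ → Fin n → ℂ)
    (C : ℝ) (hC : 0 < C)
    (hbound : ∀ p : ℕ, 1 ≤ p →
      matNorm ((r p • (1 : Matrix (Fin n) (Fin n) ℂ) - B)⁻¹) ≤ C)
    (hs : ∀ p : ℕ, 1 ≤ p →
      s p = (r p • (1 : Matrix (Fin n) (Fin n) ℂ) - B)⁻¹.mulVec (A.mulVec (s (p - 1)))) :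
    (∀ p : ℕ, vecNorm (s p) ≤ vecNorm (s 0) * (C * matNorm A) ^ p) ∧
    ∃ ρ : ℝ, 0 < ρ ∧ Summable (fun p : ℕ => vecNorm (s p) * ρ ^ p) := by
  have hK : 0 ≤ C * matNorm A := mul_nonneg hC.le (matNorm_nonneg A)
  have hstep : ∀ p, vecNorm (s (p + 1)) ≤ C * matNorm A * vecNorm (s p) := fun p => by
    rw [hs (p + 1) (Nat.le_add_left 1 p), Nat.add_sub_cancel]
    calc _ ≤ matNorm ((r (p + 1) • (1 : Matrix (Fin n) (Fin n) ℂ) - B)⁻¹) *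
          vecNorm (A.mulVec (s p)) := vecNorm_mulVec_le _ _
      _ ≤ C * (matNorm A * vecNorm (s p)) :=
          mul_le_mul (hbound _ (Nat.le_add_left 1 p)) (vecNorm_mulVec_le _ _)
            (vecNorm_nonneg _) hC.le
      _ = C * matNorm A * vecNorm (s p) := (mul_assoc _ _ _).symm
  have hgeom : ∀ p, vecNorm (s p) ≤ vecNorm (s 0) * (C * matNorm A) ^ p := fun p => by
    rw [mul_comm]
    exact le_geom (u := fun p => vecNorm (s p)) hK p fun k _ => hstep k
  exact ⟨hgeom, exists_summable_mul_pow_of_le_geometric (fun p => vecNorm_nonneg _) hK hgeom⟩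

/-- Under a uniform bound `‖(r(p)·I − B)⁻¹‖ ≤ C`, the Floquet coefficients
`s_p = (r(p)·I − B)⁻¹·A·s_{p−1}` satisfy `‖s_p‖ ≤ ‖s₀‖·(C·‖A‖)^p`, and therefore there is
`ρ > 0` with `Σ ‖s_p‖·ρ^p` summable, i.e. the Floquet solution converges near the origin. -/
theorem stmt2 (n : ℕ) (hn : 1 ≤ n) (A B : Matrix (Fin n) (Fin n) ℂ)
    (m : ℂ → ℂ) (μ : ℂ) (hm : ∀ p : ℕ, m ((p : ℂ) + μ - 1) ≠ 0)
    (r : ℕ → ℂ) (hr : ∀ p : ℕ, r p = m ((p : ℂ) + μ) / m ((p : ℂ) + μ - 1))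
    (s : ℕ → Fin n → ℂ)
    (hs0 : B.mulVec (s 0) = r 0 • s 0)
    (hinv : ∀ p : ℕ, 1 ≤ p → IsUnit (r p • (1 : Matrix (Fin n) (Fin n) ℂ) - B))
    (C : ℝ) (hC : 0 < C)
    (hbound : ∀ p : ℕ, 1 ≤ p →
      matNorm ((r p • (1 : Matrix (Fin n) (Fin n) ℂ) - B)⁻¹) ≤ C)
    (hs : ∀ p : ℕ, 1 ≤ p →
      s p = (r p • (1 : Matrix (Fin n) (Fin n) ℂ) - B)⁻¹.mulVec (A.mulVec (s (p - 1)))) :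
    (∀ p : ℕ, vecNorm (s p) ≤ vecNorm (s 0) * (C * matNorm A) ^ p) ∧
    ∃ ρ : ℝ, 0 < ρ ∧ Summable (fun p : ℕ => vecNorm (s p) * ρ ^ p) :=
  stmt2_general n A B r s C hC hbound hs
end

section
/- Let n ≥ 1, let A, B be commuting n×n complex matrices (AB = BA), λ ∈ ℂ, m : ℂ → ℂ and μ ∈ ℂ with m(p+μ−1) ≠ 0 for every natural p; set r(p) := m(p+μ)/m(p+μ−1). Assume r(k)·I − B is invertible and r(k) ≠ r(0) for every k ≥ 1, and let s₀ ∈ ℂⁿ with B·s₀ = r(0)·s₀. Define ŝ₀ := I, ŝ_k := (r(k)·I − B)⁻¹·(A − λI)·ŝ_{k−1} (k ≥ 1); h₀ := I and h_p := (r(p) − r(0))⁻¹ · Σ_{j=0}^{p−1} h_j·(λ·ŝ_{p−j−1} − (r(p) − r(p−j))·ŝ_{p−j}) for p ≥ 1; s̃_p := ŝ_p·s₀ and y_p := Σ_{j=0}^{p} h_j·s̃_{p−j}. Then y is a Floquet coefficient sequence with exponent μ for the original system: B·y₀ = r(0)·y₀ and, for every p ≥ 1, r(p)·y_p = A·y_{p−1}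 + B·y_p. (Thus y(z) = h(z)·ỹ(z) is a formal Floquet solution of z∂_m y = (zA+B)y whenever ỹ is the formal Floquet solution of z∂_m ỹ = (z(A−λI)+B)ỹ with leading coefficient s₀.) -/
/-!
Put `S_p := Σ_{j ≤ p} h_j ŝ_{p−j}`, so that `y_p = S_p s₀`. Since `A` and `B` commute, every `ŝ_k`
lies in their commutant, and then so does every `h_j`. Feeding the recursion
`(r(k) − B) ŝ_k = (A − λ) ŝ_{k−1}` into `r(p) S_p − B S_p − A S_{p−1}` and moving `A`, `B` past the
`h_j`, the terms with `j < p` add up, by the recursion defining `h_p`, to `−(r(p) − r(0)) h_p`.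
Hence `r(p) S_p = A S_{p−1} + B S_p + h_p (r(0) − B)`, and the last term annihilates `s₀`.
-/

open Finset Matrix

-- No invertibility needed: `M⁻¹ = 0` when `M` is singular.
theorem Matrix.commute_nonsing_inv_right {ι α : Type*} [Fintype ι] [DecidableEq ι] [CommRing α]
    {X M : Matrix ι ι α} (h : Commute X M) : Commute X M⁻¹ := by
  rw [nonsing_inv_eq_ringInverse]
  by_cases hM : IsUnit M
  · rw [← hM.unit_spec, Ring.inverse_unit]
    exact Commute.units_inv_right (by rwa [hM.unit_spec])
  · rw [Ring.inverse_non_unit _ hM]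
    exact Commute.zero_right X

theorem commute_sHat {ι K : Type*} [Fintype ι] [DecidableEq ι] [CommRing K]
    {A B X : Matrix ι ι K} {lam : K} {r : ℕ → K} {sh : ℕ → Matrix ι ι K}
    (hXA : Commute X A) (hXB : Commute X B) (hsh0 : sh 0 = 1)
    (hshk : ∀ p : ℕ, 1 ≤ p → sh p = (r p • (1 : Matrix ι ι K) - B)⁻¹ * (A - lam • 1) * sh (p - 1))
    (k : ℕ) : Commute X (sh k) := by
  induction k with
  | zero => rw [hsh0]; exact Commute.one_right X
  | succ k ih =>
    have hX1 : Commute X 1 := Commute.one_right X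
    rw [hshk (k + 1) (by omega), Nat.add_sub_cancel]
    exact ((commute_nonsing_inv_right ((hX1.smul_right _).sub_right hXB)).mul_right
      (hXA.sub_right (hX1.smul_right _))).mul_right ih

def cauchyProd {R : Type*} [Semiring R] (f g : ℕ → R) (p : ℕ) : R :=
  ∑ j ∈ range (p + 1), f j * g (p - j)

section GaugeRecursion

variable {K R : Type*} [Ring R] {A B : R} {lam : K} {r : ℕ → K} {sh h : ℕ → R}

theorem commute_gauge [Field K] [Algebra K R] (hh0 : h 0 = 1)
    (hhp : ∀ p : ℕ, 1 ≤ p → h p = (r p - r 0)⁻¹ •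
      ∑ j ∈ range p, h j * (lam • sh (p - j - 1) - (r p - r (p - j)) • sh (p - j)))
    {X : R} (hX : ∀ k, Commute X (sh k)) (j : ℕ) : Commute X (h j) := by
  induction j using Nat.strong_induction_on with
  | _ j ih =>
    rcases Nat.eq_zero_or_pos j with rfl | hj
    · rw [hh0]; exact Commute.one_right X
    · rw [hhp j hj]
      refine Commute.smul_right (Commute.sum_right _ _ _ fun i hi => ?_) _
      exact (ih i (mem_range.mp hi)).mul_right
        (((hX _).smul_right _).sub_right ((hX _).smul_right _))

theorem smul_cauchyProd_eq [CommRing K] [Algebra K R] (hAh : ∀ j, Commute A (h j)) (hBh : ∀ j, Commute B (h j))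
    (hsh0 : sh 0 = 1)
    (hrec : ∀ k : ℕ, 1 ≤ k → (r k • (1 : R) - B) * sh k = (A - lam • 1) * sh (k - 1))
    {p : ℕ} (hp : 1 ≤ p)
    (hgauge : (r p - r 0) • h p =
      ∑ j ∈ range p, h j * (lam • sh (p - j - 1) - (r p - r (p - j)) • sh (p - j))) :
    r p • cauchyProd h sh p =
      A * cauchyProd h sh (p - 1) + B * cauchyProd h sh p + h p * (r 0 • 1 - B) := by
  have hterm : ∀ j ∈ range p,
      r p • (h j * sh (p - j)) - B * (h j * sh (p - j)) - A * (h j * sh (p - 1 - j)) =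
        -(h j * (lam • sh (p - j - 1) - (r p - r (p - j)) • sh (p - j))) := by
    intro j hj
    have hB : B * sh (p - j) = r (p - j) • sh (p - j) - (A - lam • 1) * sh (p - j - 1) := by
      rw [← hrec (p - j) (by grind), sub_mul, smul_mul_assoc, one_mul, sub_sub_cancel]
    rw [show p - 1 - j = p - j - 1 by omega, ← mul_assoc B, (hBh j).eq, mul_assoc, hB,
      ← mul_assoc A, (hAh j).eq, mul_assoc]
    simp only [mul_sub, sub_mul, mul_smul_comm, smul_mul_assoc, one_mul]
    module
  have hS : cauchyProd h sh p = ∑ j ∈ range p, h j * sh (p - j) + h p := by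
    rw [cauchyProd, sum_range_succ, Nat.sub_self, hsh0, mul_one]
  have hS' : cauchyProd h sh (p - 1) = ∑ j ∈ range p, h j * sh (p - 1 - j) := by
    rw [cauchyProd, Nat.sub_add_cancel hp]
  have hsum : r p • ∑ j ∈ range p, h j * sh (p - j) - B * ∑ j ∈ range p, h j * sh (p - j)
      - A * ∑ j ∈ range p, h j * sh (p - 1 - j) = -((r p - r 0) • h p) := by
    rw [smul_sum, mul_sum, mul_sum, ← sum_sub_distrib, ← sum_sub_distrib, sum_congr rfl hterm,
      sum_neg_distrib, hgauge]
  rw [hS, hS', mul_sub, mul_smul_comm, mul_one, ← (hBh p).eq, smul_add, mul_add]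
  linear_combination (norm := module) hsum

end GaugeRecursion

theorem stmt6_general (n : ℕ) (A B : Matrix (Fin n) (Fin n) ℂ)
    (hAB : A * B = B * A) (lam : ℂ)
    (r : ℕ → ℂ)
    (hinv : ∀ p : ℕ, 1 ≤ p → IsUnit (r p • (1 : Matrix (Fin n) (Fin n) ℂ) - B))
    (hne : ∀ p : ℕ, 1 ≤ p → r p ≠ r 0)
    (s0 : Fin n → ℂ) (hs0 : B.mulVec s0 = r 0 • s0)
    (sh : ℕ → Matrix (Fin n) (Fin n) ℂ) (hsh0 : sh 0 = 1)
    (hshk : ∀ p : ℕ, 1 ≤ p →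
      sh p = (r p • (1 : Matrix (Fin n) (Fin n) ℂ) - B)⁻¹ * (A - lam • 1) * sh (p - 1))
    (h : ℕ → Matrix (Fin n) (Fin n) ℂ) (hh0 : h 0 = 1)
    (hhp : ∀ p : ℕ, 1 ≤ p → h p = (r p - r 0)⁻¹ •
      ∑ j ∈ Finset.range p, h j * (lam • sh (p - j - 1) - (r p - r (p - j)) • sh (p - j)))
    (st : ℕ → Fin n → ℂ) (hst : ∀ p : ℕ, st p = (sh p).mulVec s0)
    (y : ℕ → Fin n → ℂ)
    (hy : ∀ p : ℕ, y p = ∑ j ∈ Finset.range (p + 1), (h j).mulVec (st (p - j))) :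
    B.mulVec (y 0) = r 0 • y 0 ∧
    ∀ p : ℕ, 1 ≤ p → r p • y p = A.mulVec (y (p - 1)) + B.mulVec (y p) := by
  have hcomm : Commute A B := hAB
  have hAsh := commute_sHat (Commute.refl A) hcomm hsh0 hshk
  have hBsh := commute_sHat hcomm.symm (Commute.refl B) hsh0 hshk
  have hrec : ∀ k, 1 ≤ k → (r k • 1 - B) * sh k = (A - lam • 1) * sh (k - 1) := fun k hk => by
    rw [hshk k hk, mul_assoc _ _ (sh _), mul_nonsing_inv_cancel_left _ _
      ((isUnit_iff_isUnit_det _).mp (hinv k hk))]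
  have hy_eq : ∀ p, y p = cauchyProd h sh p *ᵥ s0 := fun p => by
    simp only [hy, hst, cauchyProd, sum_mulVec, mulVec_mulVec]
  have hs0_ker : (r 0 • 1 - B) *ᵥ s0 = 0 := by
    rw [sub_mulVec, smul_mulVec, one_mulVec, hs0, sub_self]
  refine ⟨by simp [hy_eq, cauchyProd, hh0, hsh0, hs0], fun p hp => ?_⟩
  have hgauge : (r p - r 0) • h p =
      ∑ j ∈ range p, h j * (lam • sh (p - j - 1) - (r p - r (p - j)) • sh (p - j)) := by
    rw [hhp p hp, smul_smul, mul_inv_cancel₀ (sub_ne_zero.mpr (hne p hp)), one_smul]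
  rw [hy_eq, hy_eq, ← smul_mulVec, smul_cauchyProd_eq (commute_gauge hh0 hhp hAsh)
    (commute_gauge hh0 hhp hBsh) hsh0 hrec hp hgauge, add_mulVec, add_mulVec, ← mulVec_mulVec,
    ← mulVec_mulVec, ← mulVec_mulVec, hs0_ker, mulVec_zero, add_zero]

/-- with `ŝ`, `h` defined by the recursions of Lemma `lematec`,
`s̃_p = ŝ_p·s₀` and `y_p = Σ_{j=0}^p h_j·s̃_{p−j}` (Cauchy product `y = h·ỹ`), the
sequence `y` is a Floquet coefficient sequence with exponent `μ` for the original
system: `B·y₀ = r(0)·y₀` and `r(p)·y_p = A·y_{p−1} + B·y_p` for all `p ≥ 1`. -/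
theorem stmt6 (n : ℕ) (hn : 1 ≤ n) (A B : Matrix (Fin n) (Fin n) ℂ)
    (hAB : A * B = B * A) (lam : ℂ)
    (m : ℂ → ℂ) (μ : ℂ) (hm : ∀ p : ℕ, m ((p : ℂ) + μ - 1) ≠ 0)
    (r : ℕ → ℂ) (hr : ∀ p : ℕ, r p = m ((p : ℂ) + μ) / m ((p : ℂ) + μ - 1))
    (hinv : ∀ p : ℕ, 1 ≤ p → IsUnit (r p • (1 : Matrix (Fin n) (Fin n) ℂ) - B))
    (hne : ∀ p : ℕ, 1 ≤ p → r p ≠ r 0)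
    (s0 : Fin n → ℂ) (hs0 : B.mulVec s0 = r 0 • s0)
    (sh : ℕ → Matrix (Fin n) (Fin n) ℂ) (hsh0 : sh 0 = 1)
    (hshk : ∀ p : ℕ, 1 ≤ p →
      sh p = (r p • (1 : Matrix (Fin n) (Fin n) ℂ) - B)⁻¹ * (A - lam • 1) * sh (p - 1))
    (h : ℕ → Matrix (Fin n) (Fin n) ℂ) (hh0 : h 0 = 1)
    (hhp : ∀ p : ℕ, 1 ≤ p → h p = (r p - r 0)⁻¹ •
      ∑ j ∈ Finset.range p, h j * (lam • sh (p - j - 1) - (r p - r (p - j)) • sh (p - j)))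
    (st : ℕ → Fin n → ℂ) (hst : ∀ p : ℕ, st p = (sh p).mulVec s0)
    (y : ℕ → Fin n → ℂ)
    (hy : ∀ p : ℕ, y p = ∑ j ∈ Finset.range (p + 1), (h j).mulVec (st (p - j))) :
    B.mulVec (y 0) = r 0 • y 0 ∧
    ∀ p : ℕ, 1 ≤ p → r p • y p = A.mulVec (y (p - 1)) + B.mulVec (y p) :=
  stmt6_general n A B hAB lam r hinv hne s0 hs0 sh hsh0 hshk h hh0 hhp st hst y hy
end

section
/- Let n ≥ 1, let A, B be commuting n×n complex matrices (AB = BA), λ ∈ ℂ, m : ℂ → ℂ and μ ∈ ℂ with m(p+μ−1) ≠ 0 for every natural p; set r(p) := m(p+μ)/m(p+μ−1). Assume r(k)·I − B is invertible for every k ≥ 1 and that there exists C > 0 with ‖(r(k)·I − B)⁻¹‖ ≤ C for all k ≥ 1, where ‖·‖ is the operator norm induced by the Euclidean norm. Define ŝ₀ := I and ŝ_k := (r(k)·I − B)⁻¹·(A − λI)·ŝ_{k−1} for k ≥ 1, and let s₀ ∈ ℂⁿ with B·s₀ = r(0)·s₀. Then ‖ŝ_p‖ ≤ (C·‖A − λI‖)^p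 for every p ≥ 1, and consequently there exists ρ > 0 such that Σ_{p≥0} ‖ŝ_p·s₀‖·ρ^p is summable; in particular the Floquet series Σ_{p≥0} ŝ_p·s₀·z^{p+μ} is convergent near the origin. -/
lemma matNorm_mul_le {n : ℕ} (M N : Matrix (Fin n) (Fin n) ℂ) :
    matNorm (M * N) ≤ matNorm M * matNorm N := by
  simp only [matNorm, map_mul]
  exact norm_mul_le _ _

lemma matNorm_one_le {n : ℕ} : matNorm (1 : Matrix (Fin n) (Fin n) ℂ) ≤ 1 := by
  simp only [matNorm, map_one]
  exact ContinuousLinearMap.norm_id_le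

lemma exists_pos_summable_mul_pow_of_le_geometric {u : ℕ → ℝ} {c K : ℝ} (hu : ∀ p, 0 ≤ u p)
    (hK : 0 ≤ K) (h : ∀ p, u p ≤ K ^ p * c) :
    ∃ ρ : ℝ, 0 < ρ ∧ Summable fun p => u p * ρ ^ p := by
  refine ⟨(K + 1)⁻¹, by positivity, ?_⟩
  have hratio : K * (K + 1)⁻¹ < 1 := by
    rw [← div_eq_mul_inv, div_lt_one (by positivity)]
    linarith
  refine Summable.of_nonneg_of_le (fun p => mul_nonneg (hu p) (by positivity)) (fun p => ?_)
    ((summable_geometric_of_lt_one (by positivity) hratio).mul_right c)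
  calc u p * (K + 1)⁻¹ ^ p ≤ K ^ p * c * (K + 1)⁻¹ ^ p := by gcongr; exact h p
    _ = (K * (K + 1)⁻¹) ^ p * c := by rw [mul_pow]; ring

theorem stmt8_general (n : ℕ) (A B : Matrix (Fin n) (Fin n) ℂ) (lam : ℂ) (r : ℕ → ℂ) (C : ℝ)
    (hbound : ∀ p : ℕ, 1 ≤ p →
      matNorm ((r p • (1 : Matrix (Fin n) (Fin n) ℂ) - B)⁻¹) ≤ C)
    (sh : ℕ → Matrix (Fin n) (Fin n) ℂ) (hsh0 : sh 0 = 1)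
    (hshk : ∀ p : ℕ, 1 ≤ p →
      sh p = (r p • (1 : Matrix (Fin n) (Fin n) ℂ) - B)⁻¹ * (A - lam • 1) * sh (p - 1))
    (s0 : Fin n → ℂ) :
    (∀ p : ℕ, 1 ≤ p → matNorm (sh p) ≤ (C * matNorm (A - lam • 1)) ^ p) ∧
    ∃ ρ : ℝ, 0 < ρ ∧ Summable (fun p : ℕ => vecNorm ((sh p).mulVec s0) * ρ ^ p) := by
  set K := C * matNorm (A - lam • 1)
  have hK : 0 ≤ K := mul_nonneg ((matNorm_nonneg _).trans (hbound 1 le_rfl)) (matNorm_nonneg _)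
  have hstep : ∀ p, matNorm (sh (p + 1)) ≤ K * matNorm (sh p) := fun p => by
    rw [hshk (p + 1) p.succ_pos, Nat.add_sub_cancel]
    refine (matNorm_mul_le _ _).trans (mul_le_mul_of_nonneg_right ?_ (matNorm_nonneg _))
    exact (matNorm_mul_le _ _).trans
      (mul_le_mul_of_nonneg_right (hbound (p + 1) p.succ_pos) (matNorm_nonneg _))
  have hgeom : ∀ p, matNorm (sh p) ≤ K ^ p := fun p =>
    calc matNorm (sh p) ≤ K ^ p * matNorm (sh 0) :=
          le_geom (u := matNorm ∘ sh) hK p fun k _ => hstep k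
      _ ≤ K ^ p := by
        rw [hsh0]
        exact mul_le_of_le_one_right (pow_nonneg hK p) matNorm_one_le
  refine ⟨fun p _ => hgeom p, exists_pos_summable_mul_pow_of_le_geometric (c := vecNorm s0)
    (fun _ => vecNorm_nonneg _) hK fun p => ?_⟩
  exact (vecNorm_mulVec_le _ _).trans (mul_le_mul_of_nonneg_right (hgeom p) (vecNorm_nonneg _))

/-- under the uniform bound `‖(r(k)·I − B)⁻¹‖ ≤ C`, the matrices
`ŝ_p = (r(p)·I − B)⁻¹·(A − λI)·ŝ_{p−1}` satisfy `‖ŝ_p‖ ≤ (C·‖A − λI‖)^p`, and hence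
there is `ρ > 0` with `Σ ‖ŝ_p·s₀‖·ρ^p` summable: the Floquet series `Σ ŝ_p·s₀·z^{p+μ}`
converges near the origin. -/
theorem stmt8 (n : ℕ) (hn : 1 ≤ n) (A B : Matrix (Fin n) (Fin n) ℂ)
    (hAB : A * B = B * A) (lam : ℂ)
    (m : ℂ → ℂ) (μ : ℂ) (hm : ∀ p : ℕ, m ((p : ℂ) + μ - 1) ≠ 0)
    (r : ℕ → ℂ) (hr : ∀ p : ℕ, r p = m ((p : ℂ) + μ) / m ((p : ℂ) + μ - 1))
    (hinv : ∀ p : ℕ, 1 ≤ p → IsUnit (r p • (1 : Matrix (Fin n) (Fin n) ℂ) - B))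
    (C : ℝ) (hC : 0 < C)
    (hbound : ∀ p : ℕ, 1 ≤ p →
      matNorm ((r p • (1 : Matrix (Fin n) (Fin n) ℂ) - B)⁻¹) ≤ C)
    (sh : ℕ → Matrix (Fin n) (Fin n) ℂ) (hsh0 : sh 0 = 1)
    (hshk : ∀ p : ℕ, 1 ≤ p →
      sh p = (r p • (1 : Matrix (Fin n) (Fin n) ℂ) - B)⁻¹ * (A - lam • 1) * sh (p - 1))
    (s0 : Fin n → ℂ) (hs0 : B.mulVec s0 = r 0 • s0) :
    (∀ p : ℕ, 1 ≤ p → matNorm (sh p) ≤ (C * matNorm (A - lam • 1)) ^ p) ∧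
    ∃ ρ : ℝ, 0 < ρ ∧ Summable (fun p : ℕ => vecNorm ((sh p).mulVec s0) * ρ ^ p) :=
  stmt8_general n A B lam r C hbound sh hsh0 hshk s0
end

section
/- Let n ≥ 1, let A, B be n×n complex matrices, λ ∈ ℂ, μ ∈ ℂ, and let m : ℂ → ℂ be such that m(k+μ)/m(k+μ−1) = k + μ for every natural number k (as happens for m(z) = Γ(1+z), i.e. the classical derivative), with m(k+μ−1) ≠ 0; set r(k) := k + μ. Assume (k+μ)·I − B is invertible for every k ≥ 1. Define ŝ₀ := I, ŝ_k := ((k+μ)·I − B)⁻¹·(A − λI)·ŝ_{k−1} for k ≥ 1, and h₀ := I, h_p := (r(p) − r(0))⁻¹ · Σ_{j=0}^{p−1} h_j·(λ·ŝ_{p−j−1} − (r(p) − r(p−j))·ŝ_{p−j}) for p ≥ 1 (note r(p) − r(0) = p and r(p) − r(p−j) = j). Then h_p = (λ^p/p!)·I for every p ≥ 0. -/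
/-! With `h_j = (λ^j/j!)·I` for `j < p`, the `j`-th summand defining `h_p` is `F (j+1) - F j` for
`F j = (j λ^j / j!)·ŝ_{p-j}`, because `r(p) - r(p-j) = j` and `(j+1) λ^{j+1}/(j+1)! = λ^{j+1}/j!`.
The sum telescopes to `F p - F 0 = (p λ^p/p!)·ŝ_0`, and dividing by `r(p) - r(0) = p` leaves
`λ^p/p!`. -/

open Finset

section Telescope

variable {𝕜 : Type*} [Field 𝕜] [CharZero 𝕜]

lemma natCast_succ_mul_pow_succ_div_factorial_succ (lam : 𝕜) (j : ℕ) :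
    ((j + 1 : ℕ) : 𝕜) * lam ^ (j + 1) / ((j + 1).factorial : 𝕜) = lam * (lam ^ j / j.factorial) := by
  have hj : ((j + 1 : ℕ) : 𝕜) ≠ 0 := Nat.cast_ne_zero.mpr j.succ_ne_zero
  have hfac : (j.factorial : 𝕜) ≠ 0 := Nat.cast_ne_zero.mpr j.factorial_ne_zero
  rw [Nat.factorial_succ, Nat.cast_mul]
  field_simp
  ring

lemma sum_range_pow_div_factorial_smul_sub_telescope {M : Type*} [AddCommGroup M] [Module 𝕜 M]
    (lam : 𝕜) (s : ℕ → M) (p : ℕ) :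
    ∑ j ∈ range p, (lam ^ j / j.factorial) • (lam • s (p - j - 1) - (j : 𝕜) • s (p - j)) =
      ((p : 𝕜) * lam ^ p / p.factorial) • s 0 := by
  set F : ℕ → M := fun j => ((j : 𝕜) * lam ^ j / j.factorial) • s (p - j)
  have hterm : ∀ j ∈ range p,
      (lam ^ j / j.factorial) • (lam • s (p - j - 1) - (j : 𝕜) • s (p - j)) = F (j + 1) - F j := by
    intro j _
    simp only [F, natCast_succ_mul_pow_succ_div_factorial_succ, Nat.sub_add_eq, smul_sub,
      smul_smul]
    congr 2
    · ring
    · ring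
  rw [sum_congr rfl hterm, sum_range_sub]
  simp [F]

end Telescope

theorem stmt9_general (n : ℕ) (lam : ℂ)
    (μ : ℂ)
    (r : ℕ → ℂ) (hr : ∀ k : ℕ, r k = (k : ℂ) + μ)
    (sh : ℕ → Matrix (Fin n) (Fin n) ℂ) (hsh0 : sh 0 = 1)
    (h : ℕ → Matrix (Fin n) (Fin n) ℂ) (hh0 : h 0 = 1)
    (hhp : ∀ p : ℕ, 1 ≤ p → h p = (r p - r 0)⁻¹ •
      ∑ j ∈ Finset.range p, h j * (lam • sh (p - j - 1) - (r p - r (p - j)) • sh (p - j))) :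
    ∀ p : ℕ, h p = (lam ^ p / (Nat.factorial p : ℂ)) • (1 : Matrix (Fin n) (Fin n) ℂ) := by
  intro p
  induction p using Nat.strong_induction_on with
  | _ p ih =>
    rcases Nat.eq_zero_or_pos p with rfl | hp
    · simpa using hh0
    have hsummand : ∀ j ∈ range p,
        h j * (lam • sh (p - j - 1) - (r p - r (p - j)) • sh (p - j)) =
          (lam ^ j / j.factorial) • (lam • sh (p - j - 1) - (j : ℂ) • sh (p - j)) := by
      intro j hj
      have hjp := (mem_range.mp hj).le
      rw [ih j (mem_range.mp hj), smul_mul_assoc, one_mul, hr, hr, Nat.cast_sub hjp,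
        add_sub_add_right_eq_sub, sub_sub_cancel]
    have hp0 : (p : ℂ) ≠ 0 := Nat.cast_ne_zero.mpr hp.ne'
    rw [hhp p hp, sum_congr rfl hsummand, sum_range_pow_div_factorial_smul_sub_telescope, hsh0,
      hr, hr, Nat.cast_zero, zero_add, add_sub_cancel_right, smul_smul, mul_div_assoc,
      inv_mul_cancel_left₀ hp0]

/-- in the classical case, where `m(k+μ)/m(k+μ−1) = k+μ` (e.g.
`m(z) = Γ(1+z)`, the usual derivative), the matrices `h_p` of the change of variables
`y = h·ỹ` are `h_p = (λ^p/p!)·I`, i.e. `h(z) = e^{λz}·I`. -/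
theorem stmt9 (n : ℕ) (hn : 1 ≤ n) (A B : Matrix (Fin n) (Fin n) ℂ) (lam : ℂ)
    (m : ℂ → ℂ) (μ : ℂ) (hm : ∀ k : ℕ, m ((k : ℂ) + μ - 1) ≠ 0)
    (hrat : ∀ k : ℕ, m ((k : ℂ) + μ) / m ((k : ℂ) + μ - 1) = (k : ℂ) + μ)
    (r : ℕ → ℂ) (hr : ∀ k : ℕ, r k = (k : ℂ) + μ)
    (hinv : ∀ k : ℕ, 1 ≤ k →
      IsUnit ((((k : ℂ) + μ)) • (1 : Matrix (Fin n) (Fin n) ℂ) - B))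
    (sh : ℕ → Matrix (Fin n) (Fin n) ℂ) (hsh0 : sh 0 = 1)
    (hshk : ∀ k : ℕ, 1 ≤ k →
      sh k = ((((k : ℂ) + μ)) • (1 : Matrix (Fin n) (Fin n) ℂ) - B)⁻¹ * (A - lam • 1) *
        sh (k - 1))
    (h : ℕ → Matrix (Fin n) (Fin n) ℂ) (hh0 : h 0 = 1)
    (hhp : ∀ p : ℕ, 1 ≤ p → h p = (r p - r 0)⁻¹ •
      ∑ j ∈ Finset.range p, h j * (lam • sh (p - j - 1) - (r p - r (p - j)) • sh (p - j))) :
    ∀ p : ℕ, h p = (lam ^ p / (Nat.factorial p : ℂ)) • (1 : Matrix (Fin n) (Fin n) ℂ) :=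
  stmt9_general n lam μ r hr sh hsh0 h hh0 hhp
end

section
/- Let m : ℂ → ℂ and μ₁, μ₂ ∈ ℂ with m(p+μ₁−1) ≠ 0 and m(μ₂−1) ≠ 0 for all natural p; set r(p) := m(p+μ₁)/m(p+μ₁−1) and κ := m(μ₂)/m(μ₂−1), and β := r(0) − κ, assuming β ≠ 0, r(p) ≠ r(0) and r(p) ≠ κ for every p ≥ 1. Let a, b, c, d ∈ ℂ with b·c = a·d (i.e. det A = 0 for A = [[a,b],[c,d]]), λ := a + d ≠ 0, and α := aβ/λ. Define f₀ := 1, g₀ := 0 and, for p ≥ 1, f_p := (a·f_{p−1} + b·g_{p−1})/(r(p) − r(0)) and g_p := (c·f_{p−1} + d·g_{p−1})/(r(p) − κ). Then for every p ≥ 2: f_p = λ^p · ∏_{i=0}^{p−1}(r(i) − r(0) + α) / ( ∏_{i=1}^{p}(r(i) − r(0)) · ∏_{i=0}^{p−1}(r(i) − r(0) + β) ). -/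
/-!
Since `det A = 0`, `b (c u + d v) = d (a u + b v)`, so the first-row combination
`s_p := a f_p + b g_p` satisfies the scalar recursion `s_p = s_{p-1} (a y_p + d x_p) / (x_p y_p)`
with `x_p = r(p) - r(0)` and `y_p = r(p) - κ = x_p + β`; its factor is `λ (x_p + α) / (x_p y_p)`.
Hence `s_p` is a product starting from `s_0 = a`, and `f_{p+1} = s_p / x_{p+1}`. In the closed
form the `i = 0` factors `α` and `β` recombine into `λ α / β = a`.
-/

open Finset

section RankOneRecurrence

variable {K : Type*} [Field K] {a b c d : K}

theorem firstRow_comb_div_diag (hdet : b * c = a * d) {x y : K} (hx : x ≠ 0) (hy : y ≠ 0)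
    (u v : K) :
    a * ((a * u + b * v) / x) + b * ((c * u + d * v) / y) =
      (a * u + b * v) * ((a * y + d * x) / (x * y)) := by
  have hrow : b * (c * u + d * v) = d * (a * u + b * v) := by linear_combination u * hdet
  field_simp
  linear_combination x * hrow

theorem firstRow_comb_eq_prod (hdet : b * c = a * d) {x y f g : ℕ → K}
    (hx : ∀ i, x (i + 1) ≠ 0) (hy : ∀ i, y (i + 1) ≠ 0)
    (hf : ∀ p, f (p + 1) = (a * f p + b * g p) / x (p + 1))
    (hg : ∀ p, g (p + 1) = (c * f p + d * g p) / y (p + 1)) (p : ℕ) :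
    a * f p + b * g p = (a * f 0 + b * g 0) *
      ∏ i ∈ range p, (a * y (i + 1) + d * x (i + 1)) / (x (i + 1) * y (i + 1)) := by
  induction p with
  | zero => simp
  | succ p ih =>
    rw [hf, hg, firstRow_comb_div_diag hdet (hx p) (hy p), ih, prod_range_succ, mul_assoc]

end RankOneRecurrence

theorem prod_range_succ_sub_apply_zero_add {K : Type*} [CommRing K] (r : ℕ → K) (γ : K)
    (q : ℕ) :
    ∏ i ∈ range (q + 1), (r i - r 0 + γ) = (∏ i ∈ range q, (r (i + 1) - r 0 + γ)) * γ := by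
  simp [prod_range_succ']

theorem stmt11_general
    (r : ℕ → ℂ)
    (κ : ℂ)
    (β : ℂ) (hβ : β = r 0 - κ) (hβ0 : β ≠ 0)
    (hne1 : ∀ p : ℕ, 1 ≤ p → r p ≠ r 0) (hne2 : ∀ p : ℕ, 1 ≤ p → r p ≠ κ)
    (a b c d : ℂ) (hdet : b * c = a * d)
    (lam : ℂ) (hlam : lam = a + d) (hlam0 : lam ≠ 0)
    (α : ℂ) (hα : α = a * β / lam)
    (f g : ℕ → ℂ) (hf0 : f 0 = 1) (hg0 : g 0 = 0)
    (hf : ∀ p : ℕ, 1 ≤ p → f p = (a * f (p - 1) + b * g (p - 1)) / (r p - r 0))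
    (hg : ∀ p : ℕ, 1 ≤ p → g p = (c * f (p - 1) + d * g (p - 1)) / (r p - κ)) :
    ∀ p : ℕ, 2 ≤ p →
      f p = lam ^ p * (∏ i ∈ Finset.range p, (r i - r 0 + α)) /
        ((∏ i ∈ Finset.range p, (r (i + 1) - r 0)) *
          ∏ i ∈ Finset.range p, (r i - r 0 + β)) := by
  have hx (i : ℕ) : r (i + 1) - r 0 ≠ 0 := sub_ne_zero.mpr (hne1 _ i.succ_pos)
  have hy (i : ℕ) : r (i + 1) - κ ≠ 0 := sub_ne_zero.mpr (hne2 _ i.succ_pos)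
  have hf' (p : ℕ) : f (p + 1) = (a * f p + b * g p) / (r (p + 1) - r 0) := by
    simpa using hf (p + 1) p.succ_pos
  have hg' (p : ℕ) : g (p + 1) = (c * f p + d * g p) / (r (p + 1) - κ) := by
    simpa using hg (p + 1) p.succ_pos
  have hαβ : lam * α = a * β := by rw [hα]; field_simp
  have hfactor (i : ℕ) : a * (r (i + 1) - κ) + d * (r (i + 1) - r 0) =
      lam * (r (i + 1) - r 0 + α) := by
    linear_combination -(r (i + 1) - r 0) * hlam - hαβ - a * hβ
  intro p hp
  obtain ⟨q, rfl⟩ : ∃ q, p = q + 1 := ⟨p - 1, by omega⟩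
  have hs := firstRow_comb_eq_prod (x := fun i => r i - r 0) (y := fun i => r i - κ)
    hdet hx hy hf' hg' q
  simp only [hf0, hg0, hfactor, mul_one, mul_zero, add_zero, prod_div_distrib,
    prod_mul_distrib, prod_const, card_range] at hs
  rw [hf', hs, prod_range_succ_sub_apply_zero_add, prod_range_succ_sub_apply_zero_add,
    prod_range_succ]
  have hPx : ∏ i ∈ range q, (r (i + 1) - r 0) ≠ 0 := prod_ne_zero_iff.mpr fun i _ => hx i
  have hPy : ∏ i ∈ range q, (r (i + 1) - κ) ≠ 0 := prod_ne_zero_iff.mpr fun i _ => hy i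
  subst hβ
  simp only [sub_add_sub_cancel]
  field_simp
  linear_combination
    -(lam ^ q * ∏ i ∈ range q, (r (i + 1) - r 0 + α)) / (r (q + 1) - r 0) * hαβ

/-- closed form of the coefficients `f_p` of the Floquet solution of the
planar system `z∂ₘy = (zA+B)y` with `B = diag(m(μ₁)/m(μ₁−1), m(μ₂)/m(μ₂−1))`,
`det A = 0` and `λ = a + d ≠ 0`:
`f_p = λ^p·∏_{i=0}^{p−1}(r(i)−r(0)+α) / (∏_{i=1}^{p}(r(i)−r(0))·∏_{i=0}^{p−1}(r(i)−r(0)+β))`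
for `p ≥ 2`. -/
theorem stmt11 (m : ℂ → ℂ) (μ1 μ2 : ℂ)
    (hm1 : ∀ p : ℕ, m ((p : ℂ) + μ1 - 1) ≠ 0) (hm2 : m (μ2 - 1) ≠ 0)
    (r : ℕ → ℂ) (hr : ∀ p : ℕ, r p = m ((p : ℂ) + μ1) / m ((p : ℂ) + μ1 - 1))
    (κ : ℂ) (hκ : κ = m μ2 / m (μ2 - 1))
    (β : ℂ) (hβ : β = r 0 - κ) (hβ0 : β ≠ 0)
    (hne1 : ∀ p : ℕ, 1 ≤ p → r p ≠ r 0) (hne2 : ∀ p : ℕ, 1 ≤ p → r p ≠ κ)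
    (a b c d : ℂ) (hdet : b * c = a * d)
    (lam : ℂ) (hlam : lam = a + d) (hlam0 : lam ≠ 0)
    (α : ℂ) (hα : α = a * β / lam)
    (f g : ℕ → ℂ) (hf0 : f 0 = 1) (hg0 : g 0 = 0)
    (hf : ∀ p : ℕ, 1 ≤ p → f p = (a * f (p - 1) + b * g (p - 1)) / (r p - r 0))
    (hg : ∀ p : ℕ, 1 ≤ p → g p = (c * f (p - 1) + d * g (p - 1)) / (r p - κ)) :
    ∀ p : ℕ, 2 ≤ p →
      f p = lam ^ p * (∏ i ∈ Finset.range p, (r i - r 0 + α)) /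
        ((∏ i ∈ Finset.range p, (r (i + 1) - r 0)) *
          ∏ i ∈ Finset.range p, (r i - r 0 + β)) :=
  stmt11_general r κ β hβ hβ0 hne1 hne2 a b c d hdet lam hlam hlam0 α hα f g hf0 hg0 hf hg
end

section
/- Let m : ℂ → ℂ and μ₁, μ₂ ∈ ℂ with m(p+μ₁−1) ≠ 0 and m(μ₂−1) ≠ 0 for all natural p; set r(p) := m(p+μ₁)/m(p+μ₁−1) and κ := m(μ₂)/m(μ₂−1), and β := r(0) − κ, assuming β ≠ 0, r(p) ≠ r(0) and r(p) ≠ κ for every p ≥ 1. Let a, b, c, d ∈ ℂ with b·c = a·d, λ := a + d ≠ 0, and α := aβ/λ. Define f₀ := 1, g₀ := 0 and, for p ≥ 1, f_p := (a·f_{p−1} + b·g_{p−1})/(r(p) − r(0)) and g_p := (c·f_{p−1} + d·g_{p−1})/(r(p) − κ). Then for every p ≥ 2: g_p = c·λ^{p−1} · ∏_{i=1}^{p−1}(r(i) − r(0) + α) / ( ∏_{i=1}^{p−1}(r(i) − r(0)) · ∏_{i=1}^{p}(r(i) − r(0) + β) ). -/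
/-!
Since `det A = 0`, the rows of `A` are proportional, so `c·(a f + b g) = a·(c f + d g)`.
Hence `V_p := c f_p + d g_p` satisfies the scalar recursion
`V_p = V_{p-1} · (a / x_p + d / (x_p + β))` with `x_p := r(p) − r(0)`, and
`a / x + d / (x + β) = λ (x + α) / (x (x + β))` because `aβ = λα`.
This gives `V_p` as a product, and `g_p = V_{p-1} / (x_p + β)`.
-/

open Finset

theorem eq_mul_prod_range_of_succ {M : Type*} [CommMonoid M] {u t : ℕ → M}
    (h : ∀ n, u (n + 1) = u n * t n) (n : ℕ) : u n = u 0 * ∏ i ∈ range n, t i := by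
  induction n with
  | zero => simp
  | succ n ih => rw [h, ih, prod_range_succ, mul_assoc]

section Field

variable {K : Type*} [Field K]

theorem div_add_div_add_eq_mul_div {a d β lam α x : K} (hlam : lam = a + d)
    (hα : a * β = lam * α) (hx : x ≠ 0) (hxβ : x + β ≠ 0) :
    a / x + d / (x + β) = lam * (x + α) / (x * (x + β)) := by
  field_simp
  linear_combination hα - x * hlam

theorem comb_succ_of_det_eq_zero {a b c d : K} (hdet : b * c = a * d) {f g X Y : ℕ → K}
    (hf : ∀ p, f (p + 1) = (a * f p + b * g p) / X (p + 1))
    (hg : ∀ p, g (p + 1) = (c * f p + d * g p) / Y (p + 1)) (p : ℕ) :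
    c * f (p + 1) + d * g (p + 1) = (c * f p + d * g p) * (a / X (p + 1) + d / Y (p + 1)) := by
  rw [hf, hg]
  simp only [div_eq_mul_inv]
  linear_combination g p * (X (p + 1))⁻¹ * hdet

theorem comb_eq_pow_mul_prod_div {a b c d β lam α : K} (hdet : b * c = a * d)
    (hlam : lam = a + d) (hα : a * β = lam * α) {f g x : ℕ → K} (hx : ∀ p, x (p + 1) ≠ 0)
    (hxβ : ∀ p, x (p + 1) + β ≠ 0) (hf0 : f 0 = 1) (hg0 : g 0 = 0)
    (hf : ∀ p, f (p + 1) = (a * f p + b * g p) / x (p + 1))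
    (hg : ∀ p, g (p + 1) = (c * f p + d * g p) / (x (p + 1) + β)) (p : ℕ) :
    c * f p + d * g p = c * lam ^ p * (∏ i ∈ range p, (x (i + 1) + α)) /
      ((∏ i ∈ range p, x (i + 1)) * ∏ i ∈ range p, (x (i + 1) + β)) := by
  have hstep (n : ℕ) : c * f (n + 1) + d * g (n + 1) =
      (c * f n + d * g n) * (lam * (x (n + 1) + α) / (x (n + 1) * (x (n + 1) + β))) := by
    rw [comb_succ_of_det_eq_zero (Y := fun n ↦ x n + β) hdet hf hg,
      div_add_div_add_eq_mul_div hlam hα (hx n) (hxβ n)]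
  refine (eq_mul_prod_range_of_succ (u := fun n ↦ c * f n + d * g n) hstep p).trans ?_
  simp only [hf0, hg0, prod_div_distrib, prod_mul_distrib, prod_const, card_range]
  ring

end Field

theorem stmt12_general (r : ℕ → ℂ) (κ : ℂ) (β : ℂ) (hβ : β = r 0 - κ)
    (hne1 : ∀ p : ℕ, 1 ≤ p → r p ≠ r 0) (hne2 : ∀ p : ℕ, 1 ≤ p → r p ≠ κ)
    (a b c d : ℂ) (hdet : b * c = a * d)
    (lam : ℂ) (hlam : lam = a + d) (hlam0 : lam ≠ 0)
    (α : ℂ) (hα : α = a * β / lam)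
    (f g : ℕ → ℂ) (hf0 : f 0 = 1) (hg0 : g 0 = 0)
    (hf : ∀ p : ℕ, 1 ≤ p → f p = (a * f (p - 1) + b * g (p - 1)) / (r p - r 0))
    (hg : ∀ p : ℕ, 1 ≤ p → g p = (c * f (p - 1) + d * g (p - 1)) / (r p - κ)) :
    ∀ p : ℕ, 2 ≤ p →
      g p = c * lam ^ (p - 1) * (∏ i ∈ Finset.range (p - 1), (r (i + 1) - r 0 + α)) /
        ((∏ i ∈ Finset.range (p - 1), (r (i + 1) - r 0)) *
          ∏ i ∈ Finset.range p, (r (i + 1) - r 0 + β)) := by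
  have hκβ (p : ℕ) : r p - κ = r p - r 0 + β := by rw [hβ]; ring
  have hf' (p : ℕ) : f (p + 1) = (a * f p + b * g p) / (r (p + 1) - r 0) := by
    simpa using hf (p + 1) p.succ_pos
  have hg' (p : ℕ) : g (p + 1) = (c * f p + d * g p) / (r (p + 1) - r 0 + β) := by
    simpa [hκβ] using hg (p + 1) p.succ_pos
  have hcomb := comb_eq_pow_mul_prod_div (x := fun p ↦ r p - r 0) (α := α) hdet hlam
    (by rw [hα, mul_div_cancel₀ _ hlam0])
    (fun p ↦ sub_ne_zero.mpr (hne1 (p + 1) p.succ_pos))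
    (fun p ↦ hκβ (p + 1) ▸ sub_ne_zero.mpr (hne2 (p + 1) p.succ_pos)) hf0 hg0 hf' hg'
  rintro (_ | q) hq
  · omega
  · rw [hg' q, hcomb q, Nat.add_sub_cancel, prod_range_succ, div_div,
      mul_assoc _ _ (r (q + 1) - r 0 + β)]

/-- closed form of the coefficients `g_p` of the Floquet solution of the
planar system `z∂ₘy = (zA+B)y` with `B = diag(m(μ₁)/m(μ₁−1), m(μ₂)/m(μ₂−1))`,
`det A = 0` and `λ = a + d ≠ 0`:
`g_p = c·λ^{p−1}·∏_{i=1}^{p−1}(r(i)−r(0)+α) / (∏_{i=1}^{p−1}(r(i)−r(0))·∏_{i=1}^{p}(r(i)−r(0)+β))`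
for `p ≥ 2`. -/
theorem stmt12 (m : ℂ → ℂ) (μ1 μ2 : ℂ)
    (hm1 : ∀ p : ℕ, m ((p : ℂ) + μ1 - 1) ≠ 0) (hm2 : m (μ2 - 1) ≠ 0)
    (r : ℕ → ℂ) (hr : ∀ p : ℕ, r p = m ((p : ℂ) + μ1) / m ((p : ℂ) + μ1 - 1))
    (κ : ℂ) (hκ : κ = m μ2 / m (μ2 - 1))
    (β : ℂ) (hβ : β = r 0 - κ) (hβ0 : β ≠ 0)
    (hne1 : ∀ p : ℕ, 1 ≤ p → r p ≠ r 0) (hne2 : ∀ p : ℕ, 1 ≤ p → r p ≠ κ)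
    (a b c d : ℂ) (hdet : b * c = a * d)
    (lam : ℂ) (hlam : lam = a + d) (hlam0 : lam ≠ 0)
    (α : ℂ) (hα : α = a * β / lam)
    (f g : ℕ → ℂ) (hf0 : f 0 = 1) (hg0 : g 0 = 0)
    (hf : ∀ p : ℕ, 1 ≤ p → f p = (a * f (p - 1) + b * g (p - 1)) / (r p - r 0))
    (hg : ∀ p : ℕ, 1 ≤ p → g p = (c * f (p - 1) + d * g (p - 1)) / (r p - κ)) :
    ∀ p : ℕ, 2 ≤ p →
      g p = c * lam ^ (p - 1) * (∏ i ∈ Finset.range (p - 1), (r (i + 1) - r 0 + α)) /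
        ((∏ i ∈ Finset.range (p - 1), (r (i + 1) - r 0)) *
          ∏ i ∈ Finset.range p, (r (i + 1) - r 0 + β)) :=
  stmt12_general r κ β hβ hne1 hne2 a b c d hdet lam hlam hlam0 α hα f g hf0 hg0 hf hg
end

section
/- Let m : ℂ → ℂ and μ₁, μ₂ ∈ ℂ with m(p+μ₁−1) ≠ 0 and m(μ₂−1) ≠ 0 for all natural p; set r(p) := m(p+μ₁)/m(p+μ₁−1), κ := m(μ₂)/m(μ₂−1) and β := r(0) − κ, assuming β ≠ 0, r(p) ≠ r(0) and r(p) ≠ κ for every p ≥ 1. Let a, b, c, d ∈ ℂ with b·c = a·d and a + d = 0 (traceless, determinant-zero A). Define f₀ := 1, g₀ := 0 and, for p ≥ 1, f_p := (a·f_{p−1} + b·g_{p−1})/(r(p) − r(0)) and g_p := (c·f_{p−1} + d·g_{p−1})/(r(p) − κ). Then for every p ≥ 2: f_p = a^p·β^{p−1} / ( ∏_{i=1}^{p}(r(i) − r(0)) · ∏_{i=1}^{p−1}(r(i) − r(0) + β) ) and g_p = c·a^{p−1}·β^{p−1} / ( ∏_{i=1}^{p−1}(r(i) − r(0)) · ∏_{i=1}^{p}(r(i)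 − r(0) + β) ). -/
/-!
Write `P p = r p - r 0` and `Q p = r p - κ = P p + β`, so the recursion reads
`diag (P p, Q p) v p = A v (p - 1)` for `v p = (f p, g p)`. Since `A` is traceless and
singular, `A² = 0` by Cayley–Hamilton, hence `A (diag (P p, Q p) v p) = A² v (p - 1) = 0` for
`p ≥ 1`. Subtracting this from `Q p · A v p` leaves `Q p · A v p = β f p · A e₁`: the Floquet
solution only ever moves along the first column `(a, c)` of `A`, so
`f (p + 1) = a β f p / (P (p + 1) Q p)` and `g (p + 1) = c β f p / (Q (p + 1) Q p)`, which
telescope to the closed forms.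
-/

open Finset

section FloquetCoefficients

variable {K : Type*} [Field K]

theorem traceless_singular_apply_of_diag_eq {a b c d β x y f g P Q : K}
    (htr : a + d = 0) (hdet : b * c = a * d) (hQ : Q = P + β)
    (hf : P * f = a * x + b * y) (hg : Q * g = c * x + d * y) :
    Q * (a * f + b * g) = β * a * f ∧ Q * (c * f + d * g) = β * c * f := by
  subst hQ
  constructor
  · linear_combination a * hf + b * hg + (b * y + a * x) * htr + x * hdet
  · linear_combination c * hf + d * hg + (c * x + d * y) * htr + y * hdet

theorem floquet_coeff_add_two {a b c d β : K} {P Q f g : ℕ → K}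
    (htr : a + d = 0) (hdet : b * c = a * d) (hQ : ∀ p, Q p = P p + β)
    (hP0 : ∀ p, P (p + 1) ≠ 0) (hQ0 : ∀ p, Q (p + 1) ≠ 0)
    (hf : ∀ p, f (p + 1) = (a * f p + b * g p) / P (p + 1))
    (hg : ∀ p, g (p + 1) = (c * f p + d * g p) / Q (p + 1)) (p : ℕ) :
    f (p + 2) = a * β * f (p + 1) / (P (p + 2) * Q (p + 1)) ∧
      g (p + 2) = c * β * f (p + 1) / (Q (p + 2) * Q (p + 1)) := by
  have hPf : P (p + 1) * f (p + 1) = a * f p + b * g p := by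
    rw [hf p, mul_div_cancel₀ _ (hP0 p)]
  have hQg : Q (p + 1) * g (p + 1) = c * f p + d * g p := by
    rw [hg p, mul_div_cancel₀ _ (hQ0 p)]
  obtain ⟨hfstep, hgstep⟩ := traceless_singular_apply_of_diag_eq htr hdet (hQ (p + 1)) hPf hQg
  have hAf : a * f (p + 1) + b * g (p + 1) = β * a * f (p + 1) / Q (p + 1) :=
    eq_div_of_mul_eq (hQ0 p) (by rw [mul_comm, hfstep])
  have hAg : c * f (p + 1) + d * g (p + 1) = β * c * f (p + 1) / Q (p + 1) :=
    eq_div_of_mul_eq (hQ0 p) (by rw [mul_comm, hgstep])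
  rw [hf (p + 1), hg (p + 1), hAf, hAg]
  constructor <;> ring

theorem floquet_f_add_one_eq {a b c d β : K} {P Q f g : ℕ → K}
    (htr : a + d = 0) (hdet : b * c = a * d) (hQ : ∀ p, Q p = P p + β)
    (hP0 : ∀ p, P (p + 1) ≠ 0) (hQ0 : ∀ p, Q (p + 1) ≠ 0)
    (hf0 : f 0 = 1) (hg0 : g 0 = 0)
    (hf : ∀ p, f (p + 1) = (a * f p + b * g p) / P (p + 1))
    (hg : ∀ p, g (p + 1) = (c * f p + d * g p) / Q (p + 1)) (q : ℕ) :
    f (q + 1) = a ^ (q + 1) * β ^ q /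
      ((∏ i ∈ range (q + 1), P (i + 1)) * ∏ i ∈ range q, Q (i + 1)) := by
  induction q with
  | zero => simp [hf 0, hf0, hg0]
  | succ q ih =>
    rw [(floquet_coeff_add_two htr hdet hQ hP0 hQ0 hf hg q).1, ih]
    simp only [prod_range_succ]
    ring

theorem floquet_g_add_two_eq {a b c d β : K} {P Q f g : ℕ → K}
    (htr : a + d = 0) (hdet : b * c = a * d) (hQ : ∀ p, Q p = P p + β)
    (hP0 : ∀ p, P (p + 1) ≠ 0) (hQ0 : ∀ p, Q (p + 1) ≠ 0)
    (hf0 : f 0 = 1) (hg0 : g 0 = 0)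
    (hf : ∀ p, f (p + 1) = (a * f p + b * g p) / P (p + 1))
    (hg : ∀ p, g (p + 1) = (c * f p + d * g p) / Q (p + 1)) (q : ℕ) :
    g (q + 2) = c * a ^ (q + 1) * β ^ (q + 1) /
      ((∏ i ∈ range (q + 1), P (i + 1)) * ∏ i ∈ range (q + 2), Q (i + 1)) := by
  rw [(floquet_coeff_add_two htr hdet hQ hP0 hQ0 hf hg q).2,
    floquet_f_add_one_eq htr hdet hQ hP0 hQ0 hf0 hg0 hf hg q]
  simp only [prod_range_succ]
  ring

end FloquetCoefficients

theorem stmt13_general (r : ℕ → ℂ) (κ : ℂ) (β : ℂ) (hβ : β = r 0 - κ)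
    (hne1 : ∀ p : ℕ, 1 ≤ p → r p ≠ r 0) (hne2 : ∀ p : ℕ, 1 ≤ p → r p ≠ κ)
    (a b c d : ℂ) (hdet : b * c = a * d) (htr : a + d = 0)
    (f g : ℕ → ℂ) (hf0 : f 0 = 1) (hg0 : g 0 = 0)
    (hf : ∀ p : ℕ, 1 ≤ p → f p = (a * f (p - 1) + b * g (p - 1)) / (r p - r 0))
    (hg : ∀ p : ℕ, 1 ≤ p → g p = (c * f (p - 1) + d * g (p - 1)) / (r p - κ)) :
    ∀ p : ℕ, 2 ≤ p →
      f p = a ^ p * β ^ (p - 1) /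
        ((∏ i ∈ Finset.range p, (r (i + 1) - r 0)) *
          ∏ i ∈ Finset.range (p - 1), (r (i + 1) - r 0 + β)) ∧
      g p = c * a ^ (p - 1) * β ^ (p - 1) /
        ((∏ i ∈ Finset.range (p - 1), (r (i + 1) - r 0)) *
          ∏ i ∈ Finset.range p, (r (i + 1) - r 0 + β)) := by
  obtain rfl : κ = r 0 - β := by rw [hβ, sub_sub_cancel]
  have hQ (p : ℕ) : r p - (r 0 - β) = r p - r 0 + β := by ring
  have hP0 (p : ℕ) : r (p + 1) - r 0 ≠ 0 := sub_ne_zero.mpr (hne1 _ p.succ_pos)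
  have hQ0 (p : ℕ) : r (p + 1) - r 0 + β ≠ 0 := by
    rw [← hQ]; exact sub_ne_zero.mpr (hne2 _ p.succ_pos)
  have hf' (p : ℕ) : f (p + 1) = (a * f p + b * g p) / (r (p + 1) - r 0) :=
    hf (p + 1) p.succ_pos
  have hg' (p : ℕ) : g (p + 1) = (c * f p + d * g p) / (r (p + 1) - r 0 + β) := by
    rw [hg (p + 1) p.succ_pos, hQ, Nat.add_sub_cancel]
  rintro p hp
  obtain ⟨q, rfl⟩ : ∃ q, p = q + 2 := ⟨p - 2, by omega⟩
  exact ⟨floquet_f_add_one_eq (P := fun i => r i - r 0) (Q := fun i => r i - r 0 + β) htr hdet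
      (fun _ => rfl) hP0 hQ0 hf0 hg0 hf' hg' (q + 1),
    floquet_g_add_two_eq (P := fun i => r i - r 0) (Q := fun i => r i - r 0 + β) htr hdet
      (fun _ => rfl) hP0 hQ0 hf0 hg0 hf' hg' q⟩

/-- closed form of the coefficients `(f_p, g_p)` of the Floquet solution
of the planar system `z∂ₘy = (zA+B)y` with `B = diag(m(μ₁)/m(μ₁−1), m(μ₂)/m(μ₂−1))`,
`det A = 0` and `λ = a + d = 0`:
`f_p = a^p·β^{p−1}/(∏_{i=1}^{p}(r(i)−r(0))·∏_{i=1}^{p−1}(r(i)−r(0)+β))` and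
`g_p = c·a^{p−1}·β^{p−1}/(∏_{i=1}^{p−1}(r(i)−r(0))·∏_{i=1}^{p}(r(i)−r(0)+β))`
for `p ≥ 2`. -/
theorem stmt13 (m : ℂ → ℂ) (μ1 μ2 : ℂ)
    (hm1 : ∀ p : ℕ, m ((p : ℂ) + μ1 - 1) ≠ 0) (hm2 : m (μ2 - 1) ≠ 0)
    (r : ℕ → ℂ) (hr : ∀ p : ℕ, r p = m ((p : ℂ) + μ1) / m ((p : ℂ) + μ1 - 1))
    (κ : ℂ) (hκ : κ = m μ2 / m (μ2 - 1))
    (β : ℂ) (hβ : β = r 0 - κ) (hβ0 : β ≠ 0)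
    (hne1 : ∀ p : ℕ, 1 ≤ p → r p ≠ r 0) (hne2 : ∀ p : ℕ, 1 ≤ p → r p ≠ κ)
    (a b c d : ℂ) (hdet : b * c = a * d) (htr : a + d = 0)
    (f g : ℕ → ℂ) (hf0 : f 0 = 1) (hg0 : g 0 = 0)
    (hf : ∀ p : ℕ, 1 ≤ p → f p = (a * f (p - 1) + b * g (p - 1)) / (r p - r 0))
    (hg : ∀ p : ℕ, 1 ≤ p → g p = (c * f (p - 1) + d * g (p - 1)) / (r p - κ)) :
    ∀ p : ℕ, 2 ≤ p →
      f p = a ^ p * β ^ (p - 1) /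
        ((∏ i ∈ Finset.range p, (r (i + 1) - r 0)) *
          ∏ i ∈ Finset.range (p - 1), (r (i + 1) - r 0 + β)) ∧
      g p = c * a ^ (p - 1) * β ^ (p - 1) /
        ((∏ i ∈ Finset.range (p - 1), (r (i + 1) - r 0)) *
          ∏ i ∈ Finset.range p, (r (i + 1) - r 0 + β)) :=
  stmt13_general r κ β hβ hne1 hne2 a b c d hdet htr f g hf0 hg0 hf hg
end

section
/- Let μ and p be positive integers and let C_k denote the k-th Catalan number C_k = (2k)!/((k+1)!·k!). Then, working in ℚ: (i) C_{k}/C_{k−1} = 4 − 6/(k+1) for every k ≥ 1, and hence C_{p+μ}/C_{p+μ−1} − C_μ/C_{μ−1} = 6p/((μ+1)(p+μ+1)); (ii) the quantity N(p) := (1/(36p²))·(μ+1)(p+μ+1)·((μ+1)(p+μ+1) + 6p), which equals the operator 1-norm of the inverse of (C_{p+μ}/C_{p+μ−1})·I − B for B = [[4 − 6/(μ+1), 1],[0, 4 − 6/(μ+1)]], satisfies N(p) ≤ N(1) = (1/36)·(μ+1)(μ+2)·((μ+1)(μ+2) + 6) for every p ≥ 1. -/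
/-!
The ratio of consecutive Catalan numbers comes from `(n + 2) C_{n+1} = 2 (2n + 1) C_n`, which
follows from `C_n = binom(2n, n) / (n + 1)` and the recurrence of the central binomial
coefficients. For the bound, `N(k) = f((k + μ + 1) / k)` with
`f(x) = (μ + 1) x ((μ + 1) x + 6) / 36` increasing on `x ≥ 0`, and `(k + μ + 1) / k` is largest
at `k = 1`.
-/

theorem catalan_pos (n : ℕ) : 0 < catalan n :=
  Nat.pos_of_mul_pos_left ((succ_mul_catalan_eq_centralBinom n).symm ▸ n.centralBinom_pos)

theorem succ_succ_mul_catalan_succ (n : ℕ) :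
    (n + 2) * catalan (n + 1) = 2 * (2 * n + 1) * catalan n := by
  apply Nat.eq_of_mul_eq_mul_left n.succ_pos
  calc (n + 1) * ((n + 2) * catalan (n + 1))
      = (n + 1) * (n + 1).centralBinom := by rw [← succ_mul_catalan_eq_centralBinom (n + 1)]
    _ = 2 * (2 * n + 1) * n.centralBinom := Nat.succ_mul_centralBinom_succ n
    _ = (n + 1) * (2 * (2 * n + 1) * catalan n) := by
      rw [← succ_mul_catalan_eq_centralBinom n]; ring

theorem catalan_succ_div_catalan {K : Type*} [Field K] [CharZero K] (n : ℕ) :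
    (catalan (n + 1) : K) / catalan n = 4 - 6 / ((n : K) + 2) := by
  have hrec : ((n : K) + 2) * catalan (n + 1) = 2 * (2 * n + 1) * catalan n := by
    exact_mod_cast succ_succ_mul_catalan_succ n
  have hC : (catalan n : K) ≠ 0 := by exact_mod_cast (catalan_pos n).ne'
  have hn : (n : K) + 2 ≠ 0 := by exact_mod_cast (n + 1).succ_ne_zero
  field_simp
  linear_combination hrec

theorem catalan_div_catalan_pred {K : Type*} [Field K] [CharZero K] {k : ℕ} (hk : 1 ≤ k) :
    (catalan k : K) / catalan (k - 1) = 4 - 6 / ((k : K) + 1) := by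
  obtain ⟨n, rfl⟩ := Nat.exists_eq_add_of_le' hk
  rw [Nat.add_sub_cancel, catalan_succ_div_catalan]
  push_cast
  ring

theorem monotoneOn_mul_mul_add {K : Type*} [Semiring K] [PartialOrder K] [IsOrderedRing K]
    {a c : K} (ha : 0 ≤ a) (hc : 0 ≤ c) :
    MonotoneOn (fun x : K => a * x * (a * x + c)) (Set.Ici 0) := by
  intro x hx y hy hxy
  have hax : 0 ≤ a * x := mul_nonneg ha hx
  have haxy : a * x ≤ a * y := mul_le_mul_of_nonneg_left hxy ha
  exact mul_le_mul haxy (add_le_add_left haxy c) (add_nonneg hax hc) (hax.trans haxy)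

theorem stmt19_general (μ p : ℕ) (hμ : 1 ≤ μ)
    (N : ℕ → ℚ)
    (hN : ∀ k : ℕ, N k = (1 / (36 * (k : ℚ) ^ 2)) * ((μ : ℚ) + 1) * ((k : ℚ) + (μ : ℚ) + 1) *
      (((μ : ℚ) + 1) * ((k : ℚ) + (μ : ℚ) + 1) + 6 * (k : ℚ))) :
    (∀ k : ℕ, 1 ≤ k →
      (catalan k : ℚ) / (catalan (k - 1) : ℚ) = 4 - 6 / ((k : ℚ) + 1)) ∧
    ((catalan (p + μ) : ℚ) / (catalan (p + μ - 1) : ℚ) -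
        (catalan μ : ℚ) / (catalan (μ - 1) : ℚ) =
      6 * (p : ℚ) / (((μ : ℚ) + 1) * ((p : ℚ) + (μ : ℚ) + 1))) ∧
    (N 1 = (1 / 36) * ((μ : ℚ) + 1) * ((μ : ℚ) + 2) * (((μ : ℚ) + 1) * ((μ : ℚ) + 2) + 6)) ∧
    (∀ k : ℕ, 1 ≤ k → N k ≤ N 1) := by
  have hN_eq (k : ℕ) (hk : 1 ≤ k) : N k = (1 / 36) * ((μ + 1) * ((k + μ + 1) / k) *
      ((μ + 1) * ((k + μ + 1) / k) + 6)) := by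
    have hk0 : (k : ℚ) ≠ 0 := by exact_mod_cast (Nat.one_le_iff_ne_zero.mp hk)
    rw [hN k]
    field_simp
  refine ⟨fun k hk => catalan_div_catalan_pred hk, ?_, ?_, fun k hk => ?_⟩
  · rw [catalan_div_catalan_pred (hμ.trans (Nat.le_add_left μ p)), catalan_div_catalan_pred hμ]
    push_cast
    field_simp
    ring
  · rw [hN 1]
    norm_num
    ring
  · have hk1 : (1 : ℚ) ≤ k := by exact_mod_cast hk
    have hx : ((k : ℚ) + μ + 1) / k ≤ (1 + μ + 1) / 1 := by
      rw [div_le_div_iff₀ (by linarith) one_pos]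
      nlinarith [(Nat.cast_nonneg μ : (0 : ℚ) ≤ μ)]
    rw [hN_eq k hk, hN_eq 1 le_rfl, Nat.cast_one]
    gcongr 1 / 36 * ?_
    exact monotoneOn_mul_mul_add (by positivity) (by norm_num)
      (Set.mem_Ici.mpr (by positivity)) (Set.mem_Ici.mpr (by positivity)) hx

/-- for the Catalan moment sequence `m(k) = C_k`, in `ℚ`:
(i) `C_k/C_{k−1} = 4 − 6/(k+1)` for `k ≥ 1`, hence
`C_{p+μ}/C_{p+μ−1} − C_μ/C_{μ−1} = 6p/((μ+1)(p+μ+1))`;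
(ii) `N(k) := (1/(36k²))·(μ+1)(k+μ+1)·((μ+1)(k+μ+1)+6k)` — the operator 1-norm of
the inverse of `(C_{k+μ}/C_{k+μ−1})·I − B` for `B = [[4−6/(μ+1),1],[0,4−6/(μ+1)]]` —
satisfies `N(1) = (1/36)·(μ+1)(μ+2)·((μ+1)(μ+2)+6)` and `N(k) ≤ N(1)` for all `k ≥ 1`,
verifying hypothesis (H2) in the Catalan example. -/
theorem stmt19 (μ p : ℕ) (hμ : 1 ≤ μ) (hp : 1 ≤ p)
    (N : ℕ → ℚ)
    (hN : ∀ k : ℕ, N k = (1 / (36 * (k : ℚ) ^ 2)) * ((μ : ℚ) + 1) * ((k : ℚ) + (μ : ℚ) + 1) *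
      (((μ : ℚ) + 1) * ((k : ℚ) + (μ : ℚ) + 1) + 6 * (k : ℚ))) :
    (∀ k : ℕ, 1 ≤ k →
      (catalan k : ℚ) / (catalan (k - 1) : ℚ) = 4 - 6 / ((k : ℚ) + 1)) ∧
    ((catalan (p + μ) : ℚ) / (catalan (p + μ - 1) : ℚ) -
        (catalan μ : ℚ) / (catalan (μ - 1) : ℚ) =
      6 * (p : ℚ) / (((μ : ℚ) + 1) * ((p : ℚ) + (μ : ℚ) + 1))) ∧
    (N 1 = (1 / 36) * ((μ : ℚ) + 1) * ((μ : ℚ) + 2) * (((μ : ℚ) + 1) * ((μ : ℚ) + 2) + 6)) ∧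
    (∀ k : ℕ, 1 ≤ k → N k ≤ N 1) :=
  stmt19_general μ p hμ N hN
end
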